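/- Suppose $v_1,\ldots,v_n > 0$ with $\sum_i v_i = 1$ and $0 < T_B \le T_A$. Let player $A$'s mixed strategy have marginals $X_{A,i} \sim \mathrm{Unif}[0, 2T_A v_i]$. Then for every pure strategy $x_B \in \mathbb{R}_+^n$ of player $B$ with $\sum_i x_{B,i} \le T_B$, the expected utility of player $A$ satisfies $\sum_{i=1}^n v_i\, \mathbb{P}(X_{A,i} > x_{B,i}) = 1 - \sum_{i=1}^n \min\left(v_i, \frac{x_{B,i}}{2T_A}\right) \ge 1 - \frac{T_B}{2T_A}$. -/

import Mathlib

open MeasureTheory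

/-- The uniform probability measure on `[0, b]`. -/
noncomputable def unifIcc (b : ℝ) : Measure ℝ :=
  (ENNReal.ofReal b)⁻¹ • volume.restrict (Set.Icc 0 b)

lemma unifIcc_Ioi_toReal {b x : ℝ} (hb : 0 < b) (hx : 0 ≤ x) :
    ((unifIcc b) (Set.Ioi x)).toReal = 1 - min 1 (x / b) := by
  have hIoc : Set.Ioi x ∩ Set.Icc 0 b = Set.Ioc x b := by
    ext y
    simp only [Set.mem_inter_iff, Set.mem_Ioi, Set.mem_Icc, Set.mem_Ioc]
    exact ⟨fun ⟨hxy, _, hyb⟩ => ⟨hxy, hyb⟩, fun ⟨hxy, hyb⟩ => ⟨hxy, hx.trans hxy.le, hyb⟩⟩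
  rw [unifIcc, Measure.smul_apply, Measure.restrict_apply measurableSet_Ioi, hIoc,
    Real.volume_Ioc, smul_eq_mul, ENNReal.toReal_mul, ENNReal.toReal_inv,
    ENNReal.toReal_ofReal hb.le, ENNReal.toReal_ofReal', inv_mul_eq_div,
    ← max_div_div_right hb.le, zero_div, sub_div, div_self hb.ne', ← max_sub_sub_left, sub_self,
    max_comm]

lemma mul_unifIcc_Ioi_toReal {c v x : ℝ} (hc : 0 < c) (hv : 0 < v) (hx : 0 ≤ x) :
    v * ((unifIcc (c * v)) (Set.Ioi x)).toReal = v - min v (x / c) := by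
  rw [unifIcc_Ioi_toReal (mul_pos hc hv) hx, mul_sub, mul_one, mul_min_of_nonneg _ _ hv.le,
    mul_one, mul_div_assoc', mul_comm c v, mul_div_mul_left _ _ hv.ne']

theorem stmt_16 (n : ℕ) (v : Fin n → ℝ) (TA TB : ℝ)
    (hv : ∀ i, 0 < v i) (hsv : ∑ i, v i = 1)
    (hTB : 0 < TB) (hT : TB ≤ TA)
    (xB : Fin n → ℝ) (hxB : ∀ i, 0 ≤ xB i) (hbudget : ∑ i, xB i ≤ TB) :
    (∑ i, v i * ((unifIcc (2 * TA * v i)) (Set.Ioi (xB i))).toReal)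
        = 1 - ∑ i, min (v i) (xB i / (2 * TA)) ∧
      1 - TB / (2 * TA) ≤ 1 - ∑ i, min (v i) (xB i / (2 * TA)) := by
  have h2TA : 0 < 2 * TA := by linarith
  refine ⟨?_, sub_le_sub_left ?_ 1⟩
  · simp_rw [mul_unifIcc_Ioi_toReal h2TA (hv _) (hxB _)]
    rw [Finset.sum_sub_distrib, hsv]
  · calc ∑ i, min (v i) (xB i / (2 * TA))
        ≤ ∑ i, xB i / (2 * TA) := Finset.sum_le_sum fun i _ => min_le_right _ _
      _ = (∑ i, xB i) / (2 * TA) := (Finset.sum_div _ _ _).symm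
      _ ≤ TB / (2 * TA) := by gcongr
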